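/- arXiv:0905.2383 — 2 statements merged into one kernel-verified Lean document; each statement's English description precedes it below -/
import Mathlib

section
/- Let (φ, η) be an admissible pair with I = ℓ(φ) ∩ η. Let J ⊆ r(I) and K ⊆ I be subsets with ℓ(J) ∩ K = ∅, and also assume J ⊆ φ. Then the pair (φ \ J, η \ K) is admissible. -/
open Set

theorem Set.preimage_subset_of_subset_image {α β : Type*} {f : α → β} (hf : f.Injective)
    {I : Set α} {J : Set β} (hJ : J ⊆ f '' I) : f ⁻¹' J ⊆ I :=
  (preimage_mono hJ).trans (preimage_image_eq I hf).subset

theorem Set.preimage_compl_sdiff_subset_sdiff {α β : Type*} {f : α → β} {φ J : Set β}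
    {η K : Set α} (hφ : f ⁻¹' φᶜ ⊆ η) (hJ : f ⁻¹' J ⊆ η) (hJK : Disjoint (f ⁻¹' J) K)
    (hK : K ⊆ f ⁻¹' φ) : f ⁻¹' (φ \ J)ᶜ ⊆ η \ K := by
  rw [Set.compl_sdiff, preimage_union]
  exact union_subset (subset_sdiff.2 ⟨hJ, hJK⟩)
    (subset_sdiff.2 ⟨hφ, disjoint_compl_left.mono_right hK⟩)

theorem admissible_sub_pair_general (B : Type*) (σ : Equiv.Perm B)
    (φ η I J K : Set B) (hadm : σ ⁻¹' φᶜ ⊆ η) (hI : I = σ ⁻¹' φ ∩ η)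
    (hJ : J ⊆ σ '' I) (hK : K ⊆ I) (hJK : σ ⁻¹' J ∩ K = ∅) :
    σ ⁻¹' (φ \ J)ᶜ ⊆ η \ K := by
  have hJI : σ ⁻¹' J ⊆ I := preimage_subset_of_subset_image σ.injective hJ
  subst hI
  exact preimage_compl_sdiff_subset_sdiff hadm (hJI.trans inter_subset_right)
    (disjoint_iff_inter_eq_empty.2 hJK) (hK.trans inter_subset_left)

/-- For an admissible pair `(φ, η)` with `I = ℓ(φ) ∩ η`, and `J ⊆ r(I)`, `K ⊆ I`
with `ℓ(J) ∩ K = ∅` and `J ⊆ φ`, the pair `(φ \ J, η \ K)` is admissible. -/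
theorem admissible_sub_pair (B : Type*) [Fintype B] (σ : Equiv.Perm B)
    (φ η I J K : Set B) (hadm : σ ⁻¹' φᶜ ⊆ η) (hI : I = σ ⁻¹' φ ∩ η)
    (hJ : J ⊆ σ '' I) (hK : K ⊆ I) (hJK : σ ⁻¹' J ∩ K = ∅) (hJφ : J ⊆ φ) :
    σ ⁻¹' (φ \ J)ᶜ ⊆ η \ K :=
  admissible_sub_pair_general B σ φ η I J K hadm hI hJ hK hJK
end

section
/- Let k be a field, I a finite index set, β₀, β₁ ∈ I two distinct elements, and R = k[x_γ, y_γ : γ ∈ I] a polynomial ring. For J ⊆ I let 𝔍_J be the ideal of R generated by {x_γ : γ ∉ J} ∪ {y_γ : γ ∈ J}. Then the intersection of the ideals 𝔍_J over all J ⊆ I with β₀ ∉ J and β₁ ∈ J equals the ideal generated by x_{β₀}, y_{β₁}, and all products x_γ·y_γ for γ ∈ I. -/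
/-!
All ideals involved are monomial ideals, so it suffices to compare the exponent vectors `m` they
contain. Write `p γ` for `x_γ ∣ m` and `q γ` for `y_γ ∣ m`. If `m` is divisible by none of the
generators on the right, then `J = {γ | p γ} ∪ {β₁}` is admissible (it avoids `β₀`, as `¬ p β₀`
and `β₀ ≠ β₁`), and `x^m ∉ 𝔍_J`.
-/

open MvPolynomial

theorem forall_exists_compl_or_exists_mem_iff {I : Type*} {β₀ β₁ : I} (hβ : β₀ ≠ β₁)
    (p q : I → Prop) :
    (∀ J : Set I, β₀ ∉ J → β₁ ∈ J → (∃ γ ∈ Jᶜ, p γ) ∨ ∃ γ ∈ J, q γ) ↔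
      p β₀ ∨ q β₁ ∨ ∃ γ, p γ ∧ q γ := by
  refine ⟨fun h => ?_, ?_⟩
  · by_contra! ⟨hp₀, hq₁, hpq⟩
    rcases h ({γ | p γ} ∪ {β₁}) (by simp [hp₀, hβ]) (by simp) with
      ⟨γ, hγ, hpγ⟩ | ⟨γ, hpγ | rfl, hqγ⟩
    · exact hγ (Or.inl hpγ)
    · exact hpq γ hpγ hqγ
    · exact hq₁ hqγ
  · rintro (hp₀ | hq₁ | ⟨γ, hp, hq⟩) J hβ₀ hβ₁
    · exact .inl ⟨β₀, hβ₀, hp₀⟩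
    · exact .inr ⟨β₁, hβ₁, hq₁⟩
    · by_cases hγ : γ ∈ J
      · exact .inr ⟨γ, hγ, hq⟩
      · exact .inl ⟨γ, hγ, hp⟩

theorem Finsupp.single_one_add_single_one_le_iff {σ : Type*} {a b : σ} (hab : a ≠ b)
    {m : σ →₀ ℕ} : single a 1 + single b 1 ≤ m ↔ m a ≠ 0 ∧ m b ≠ 0 := by
  refine ⟨fun h => ⟨?_, ?_⟩, fun ⟨ha, hb⟩ c => ?_⟩
  · simpa [hab, Nat.one_le_iff_ne_zero] using h a
  · simpa [hab.symm, Nat.one_le_iff_ne_zero] using h b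
  · classical
    simp only [coe_add, Pi.add_apply, single_apply]
    grind

namespace MvPolynomial

variable {σ τ R : Type*} [CommSemiring R]

theorem mem_span_X_inl_image_union_X_inr_image_iff {A : Set σ} {B : Set τ}
    {f : MvPolynomial (σ ⊕ τ) R} :
    f ∈ Ideal.span ((fun γ => X (Sum.inl γ)) '' A ∪ (fun γ => X (Sum.inr γ)) '' B) ↔
      ∀ m ∈ f.support, (∃ γ ∈ A, m (Sum.inl γ) ≠ 0) ∨ ∃ γ ∈ B, m (Sum.inr γ) ≠ 0 := by
  rw [← Set.image_image X Sum.inl, ← Set.image_image X Sum.inr, ← Set.image_union,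
    mem_ideal_span_X_image]
  simp [or_and_right, exists_or]

theorem mem_span_X_inl_X_inr_X_inl_mul_X_inr_iff {a b : σ} {f : MvPolynomial (σ ⊕ σ) R} :
    f ∈ Ideal.span ({X (Sum.inl a), X (Sum.inr b)} ∪
        Set.range fun γ => X (Sum.inl γ) * X (Sum.inr γ)) ↔
      ∀ m ∈ f.support, m (Sum.inl a) ≠ 0 ∨ m (Sum.inr b) ≠ 0 ∨
        ∃ γ, m (Sum.inl γ) ≠ 0 ∧ m (Sum.inr γ) ≠ 0 := by
  have hgen : ({X (Sum.inl a), X (Sum.inr b)} ∪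
        Set.range fun γ => X (Sum.inl γ) * X (Sum.inr γ) : Set (MvPolynomial (σ ⊕ σ) R)) =
      (fun s => monomial s 1) '' ({.single (Sum.inl a) 1, .single (Sum.inr b) 1} ∪
        Set.range fun γ => .single (Sum.inl γ) 1 + .single (Sum.inr γ) 1) := by
    simp [Set.image_union, Set.image_insert_eq, ← Set.range_comp, Function.comp_def, X,
      monomial_mul]
  rw [hgen, mem_ideal_span_monomial_image]
  simp [Finsupp.single_le_iff, Nat.one_le_iff_ne_zero,
    Finsupp.single_one_add_single_one_le_iff Sum.inl_ne_inr, or_assoc]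

end MvPolynomial

theorem inf_ideals_J_general (k : Type*) [Field k] (I : Type*)
    (β₀ β₁ : I) (hβ : β₀ ≠ β₁) :
    (⨅ J ∈ {J : Set I | β₀ ∉ J ∧ β₁ ∈ J},
        Ideal.span ((fun γ => (X (Sum.inl γ) : MvPolynomial (I ⊕ I) k)) '' Jᶜ ∪
          (fun γ => (X (Sum.inr γ) : MvPolynomial (I ⊕ I) k)) '' J)) =
      Ideal.span ({(X (Sum.inl β₀) : MvPolynomial (I ⊕ I) k), X (Sum.inr β₁)} ∪
        Set.range fun γ : I =>
          (X (Sum.inl γ) : MvPolynomial (I ⊕ I) k) * X (Sum.inr γ)) := by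
  ext f
  simp only [Ideal.mem_iInf, Set.mem_ofPred_eq, mem_span_X_inl_image_union_X_inr_image_iff,
    mem_span_X_inl_X_inr_X_inl_mul_X_inr_iff]
  constructor
  · intro h m hm
    exact (forall_exists_compl_or_exists_mem_iff hβ _ _).1 fun J h₀ h₁ => h J ⟨h₀, h₁⟩ m hm
  · intro h J ⟨h₀, h₁⟩ m hm
    exact (forall_exists_compl_or_exists_mem_iff hβ _ _).2 (h m hm) J h₀ h₁

/-- In `R = k[x_γ, y_γ : γ ∈ I]` (with `x_γ = X (inl γ)`, `y_γ = X (inr γ)`), the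
intersection of the ideals `𝔍_J = ⟨{x_γ : γ ∉ J} ∪ {y_γ : γ ∈ J}⟩` over all
`J ⊆ I` with `β₀ ∉ J` and `β₁ ∈ J` equals `⟨x_{β₀}, y_{β₁}, {x_γ y_γ : γ ∈ I}⟩`. -/
theorem inf_ideals_J (k : Type*) [Field k] (I : Type*) [Fintype I] [DecidableEq I]
    (β₀ β₁ : I) (hβ : β₀ ≠ β₁) :
    (⨅ J ∈ {J : Set I | β₀ ∉ J ∧ β₁ ∈ J},
        Ideal.span ((fun γ => (X (Sum.inl γ) : MvPolynomial (I ⊕ I) k)) '' Jᶜ ∪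
          (fun γ => (X (Sum.inr γ) : MvPolynomial (I ⊕ I) k)) '' J)) =
      Ideal.span ({(X (Sum.inl β₀) : MvPolynomial (I ⊕ I) k), X (Sum.inr β₁)} ∪
        Set.range fun γ : I =>
          (X (Sum.inl γ) : MvPolynomial (I ⊕ I) k) * X (Sum.inr γ)) :=
  inf_ideals_J_general k I β₀ β₁ hβ
end
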